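/- arXiv:math/0010036 — 2 statements merged into one kernel-verified Lean document; each statement's English description precedes it below -/
import Mathlib

section
/- Suppose z₁,…,z₆ : ℝ → ℂ³ are differentiable functions satisfying at t = 0 the constraints ω(z₂,z₃) = ω(z₁,z₃) = ω(z₁,z₂) = 0, ω(z₁,z₅) + ω(z₂,z₅) − ω(z₃,z₄) = 0, −ω(z₁,z₄) + ω(z₂,z₄) + ω(z₃,z₅) = 0, ω(z₄,z₅) = 0, and satisfying for all t ∈ ℝ the evolution equations dz₁/dt = 2 z₂×z₃, dz₂/dt = 2 z₁×z₃, dz₃/dt = −2 z₁×z₂, dz₄/dt = z₁×z₅ + z₂×z₅ − z₃×z₄, dz₅/dt = −z₁×z₄ + z₂×z₄ + z₃×z₅, dz₆/dt = z₄×z₅. Define Φ : ℝ³ → ℂ³ by Φ(y₁,y₂,t) = ½(y₁²+y₂²)z₁(t) + ½(y₁²−y₂²)z₂(t) + y₁y₂ z₃(t) + y₁ z₄(t) + y₂ z₅(t) + z₆(t). Then at every point of ℝ³ one has ω(∂Φ/∂y₁, ∂Φ/∂y₂) = ω(∂Φ/∂y₁, ∂Φ/∂t) = ω(∂Φ/∂y₂,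 ∂Φ/∂t) = 0 and (∂Φ/∂y₁) × (∂Φ/∂y₂) = ∂Φ/∂t. -/
/-!
Write `U = Φ_{y₁}` and `V = Φ_{y₂}`; both are affine in the `zᵢ(t)`. The identity `U × V = Φ_t` is
purely algebraic (it is how the evolution equations are built), and `ω(w, w × v) = ω(v, w × v) = 0`
then gives the two mixed conditions. For fixed `y`, the evolution equations make `ω(U, V)`
constant in `t`, and at `t = 0` it is a combination of the six constraints, hence zero.
-/

noncomputable section

open Complex ComplexConjugate

/-- ℂ³ as triples of complex numbers. -/
abbrev C3 := ℂ × ℂ × ℂ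

/-- The standard Kähler form ω(u,v) = Σ Im(conj(u_j)·v_j). -/
def omega3 (u v : C3) : ℝ :=
  (conj u.1 * v.1).im + (conj u.2.1 * v.2.1).im + (conj u.2.2 * v.2.2).im

/-- The antibilinear cross product on ℂ³. -/
def cross3 (u v : C3) : C3 :=
  ((1/2 : ℂ) * conj (u.2.1 * v.2.2 - u.2.2 * v.2.1),
   (1/2 : ℂ) * conj (u.2.2 * v.1 - u.1 * v.2.2),
   (1/2 : ℂ) * conj (u.1 * v.2.1 - u.2.1 * v.1))

/-- The map Φ(y₁,y₂,t) = ½(y₁²+y₂²)z₁(t) + ½(y₁²−y₂²)z₂(t) + y₁y₂ z₃(t)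
    + y₁ z₄(t) + y₂ z₅(t) + z₆(t). -/
def PhiMap (z₁ z₂ z₃ z₄ z₅ z₆ : ℝ → C3) (y₁ y₂ t : ℝ) : C3 :=
  ((1/2 : ℝ) * (y₁^2 + y₂^2)) • z₁ t + ((1/2 : ℝ) * (y₁^2 - y₂^2)) • z₂ t
  + (y₁ * y₂) • z₃ t + y₁ • z₄ t + y₂ • z₅ t + z₆ t

section Algebra

variable (a b c d e : C3) (y₁ y₂ : ℝ)

lemma omega3_cross3_self_left (u v : C3) : omega3 u (cross3 u v) = 0 := by
  simp [omega3, cross3]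
  ring

lemma omega3_cross3_self_right (u v : C3) : omega3 v (cross3 u v) = 0 := by
  simp [omega3, cross3]
  ring

lemma cross3_tangents_eq :
    cross3 (y₁ • (a + b) + y₂ • c + d) (y₂ • (a - b) + y₁ • c + e)
      = ((1/2 : ℝ) * (y₁^2 + y₂^2)) • ((2:ℝ) • cross3 b c)
        + ((1/2 : ℝ) * (y₁^2 - y₂^2)) • ((2:ℝ) • cross3 a c)
        + (y₁ * y₂) • ((-2:ℝ) • cross3 a b) + y₁ • (cross3 a e + cross3 b e - cross3 c d)
        + y₂ • (-cross3 a d + cross3 b d + cross3 c e) + cross3 d e := by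
  refine Prod.ext ?_ (Prod.ext ?_ ?_) <;>
  · simp [cross3, real_smul]
    ring

lemma omega3_tangents_eq :
    omega3 (y₁ • (a + b) + y₂ • c + d) (y₂ • (a - b) + y₁ • c + e)
      = (-2 * y₁ * y₂) * omega3 a b + (y₁^2 - y₂^2) * omega3 a c + (y₁^2 + y₂^2) * omega3 b c
        + y₁ * (omega3 a e + omega3 b e - omega3 c d)
        + y₂ * (-omega3 a d + omega3 b d + omega3 c e) + omega3 d e := by
  simp [omega3]
  ring

/-- Up to antisymmetry of `ω`, every term is a multiple of some `ω(w, u × v) = -½ Im det(w, u, v)`;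
this form is alternating, so the terms cancel. -/
lemma omega3_tangents_deriv_eq_zero :
    omega3 (y₁ • ((2:ℝ) • cross3 b c + (2:ℝ) • cross3 a c) + y₂ • ((-2:ℝ) • cross3 a b)
        + (cross3 a e + cross3 b e - cross3 c d)) (y₂ • (a - b) + y₁ • c + e)
      + omega3 (y₁ • (a + b) + y₂ • c + d)
        (y₂ • ((2:ℝ) • cross3 b c - (2:ℝ) • cross3 a c) + y₁ • ((-2:ℝ) • cross3 a b)
          + (-cross3 a d + cross3 b d + cross3 c e)) = 0 := by
  simp [omega3, cross3]
  ring

end Algebra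

section Calculus

lemma hasDerivAt_im_conj_mul {f g : ℝ → ℂ} {f' g' : ℂ} {t : ℝ}
    (hf : HasDerivAt f f' t) (hg : HasDerivAt g g' t) :
    HasDerivAt (fun s => (conj (f s) * g s).im) ((conj f' * g t).im + (conj (f t) * g').im) t :=
  (imCLM.hasFDerivAt.comp_hasDerivAt t (hf.star.mul hg)).congr_deriv (by simp)

lemma hasDerivAt_omega3 {u v : ℝ → C3} {u' v' : C3} {t : ℝ}
    (hu : HasDerivAt u u' t) (hv : HasDerivAt v v' t) :
    HasDerivAt (fun s => omega3 (u s) (v s)) (omega3 u' (v t) + omega3 (u t) v') t := by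
  refine (((hasDerivAt_im_conj_mul hu.fst hv.fst).add
    (hasDerivAt_im_conj_mul hu.snd.fst hv.snd.fst)).add
    (hasDerivAt_im_conj_mul hu.snd.snd hv.snd.snd)).congr_deriv ?_
  simp only [omega3]
  ring

lemma hasDerivAt_half_sq_smul_add {E : Type*} [NormedAddCommGroup E] [NormedSpace ℝ E]
    (p q r : E) (x : ℝ) :
    HasDerivAt (fun s : ℝ => (s ^ 2 / 2) • p + s • q + r) (x • p + q) x := by
  refine ((((hasDerivAt_pow 2 x).div_const 2).smul_const p).add
    ((hasDerivAt_id x).smul_const q)).add_const r |>.congr_deriv ?_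
  simp

end Calculus

section PhiMap

variable {z₁ z₂ z₃ z₄ z₅ z₆ : ℝ → C3} (y₁ y₂ t : ℝ)

lemma hasDerivAt_PhiMap_fst :
    HasDerivAt (fun s => PhiMap z₁ z₂ z₃ z₄ z₅ z₆ s y₂ t)
      (y₁ • (z₁ t + z₂ t) + y₂ • z₃ t + z₄ t) y₁ := by
  have hΦ : (fun s => PhiMap z₁ z₂ z₃ z₄ z₅ z₆ s y₂ t) = fun s : ℝ => (s ^ 2 / 2) • (z₁ t + z₂ t)
      + s • (y₂ • z₃ t + z₄ t) + ((y₂ ^ 2 / 2) • (z₁ t - z₂ t) + y₂ • z₅ t + z₆ t) := by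
    funext s
    simp only [PhiMap]
    module
  rw [hΦ]
  exact (hasDerivAt_half_sq_smul_add (z₁ t + z₂ t) (y₂ • z₃ t + z₄ t) _ y₁).congr_deriv
    (add_assoc _ _ _).symm

lemma hasDerivAt_PhiMap_snd :
    HasDerivAt (fun s => PhiMap z₁ z₂ z₃ z₄ z₅ z₆ y₁ s t)
      (y₂ • (z₁ t - z₂ t) + y₁ • z₃ t + z₅ t) y₂ := by
  have hΦ : (fun s => PhiMap z₁ z₂ z₃ z₄ z₅ z₆ y₁ s t) = fun s : ℝ => (s ^ 2 / 2) • (z₁ t - z₂ t)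
      + s • (y₁ • z₃ t + z₅ t) + ((y₁ ^ 2 / 2) • (z₁ t + z₂ t) + y₁ • z₄ t + z₆ t) := by
    funext s
    simp only [PhiMap]
    module
  rw [hΦ]
  exact (hasDerivAt_half_sq_smul_add (z₁ t - z₂ t) (y₁ • z₃ t + z₅ t) _ y₂).congr_deriv
    (add_assoc _ _ _).symm

lemma hasDerivAt_PhiMap_time {z₁' z₂' z₃' z₄' z₅' z₆' : ℝ → C3}
    (h₁ : ∀ t, HasDerivAt z₁ (z₁' t) t) (h₂ : ∀ t, HasDerivAt z₂ (z₂' t) t)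
    (h₃ : ∀ t, HasDerivAt z₃ (z₃' t) t) (h₄ : ∀ t, HasDerivAt z₄ (z₄' t) t)
    (h₅ : ∀ t, HasDerivAt z₅ (z₅' t) t) (h₆ : ∀ t, HasDerivAt z₆ (z₆' t) t) :
    HasDerivAt (fun s => PhiMap z₁ z₂ z₃ z₄ z₅ z₆ y₁ y₂ s)
      (PhiMap z₁' z₂' z₃' z₄' z₅' z₆' y₁ y₂ t) t := by
  unfold PhiMap
  exact ((((((h₁ t).const_smul ((1/2 : ℝ) * (y₁^2 + y₂^2))).add
    ((h₂ t).const_smul ((1/2 : ℝ) * (y₁^2 - y₂^2)))).add ((h₃ t).const_smul (y₁ * y₂))).add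
    ((h₄ t).const_smul y₁)).add ((h₅ t).const_smul y₂)).add (h₆ t)

lemma omega3_tangents_const
    (hz1 : ∀ t : ℝ, HasDerivAt z₁ ((2:ℝ) • cross3 (z₂ t) (z₃ t)) t)
    (hz2 : ∀ t : ℝ, HasDerivAt z₂ ((2:ℝ) • cross3 (z₁ t) (z₃ t)) t)
    (hz3 : ∀ t : ℝ, HasDerivAt z₃ ((-2:ℝ) • cross3 (z₁ t) (z₂ t)) t)
    (hz4 : ∀ t : ℝ, HasDerivAt z₄
      (cross3 (z₁ t) (z₅ t) + cross3 (z₂ t) (z₅ t) - cross3 (z₃ t) (z₄ t)) t)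
    (hz5 : ∀ t : ℝ, HasDerivAt z₅
      (-cross3 (z₁ t) (z₄ t) + cross3 (z₂ t) (z₄ t) + cross3 (z₃ t) (z₅ t)) t) (s : ℝ) :
    omega3 (y₁ • (z₁ t + z₂ t) + y₂ • z₃ t + z₄ t) (y₂ • (z₁ t - z₂ t) + y₁ • z₃ t + z₅ t)
      = omega3 (y₁ • (z₁ s + z₂ s) + y₂ • z₃ s + z₄ s)
          (y₂ • (z₁ s - z₂ s) + y₁ • z₃ s + z₅ s) := by
  have hderiv : ∀ τ, HasDerivAt (fun τ => omega3 (y₁ • (z₁ τ + z₂ τ) + y₂ • z₃ τ + z₄ τ)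
      (y₂ • (z₁ τ - z₂ τ) + y₁ • z₃ τ + z₅ τ)) 0 τ := by
    intro τ
    have hU := ((((hz1 τ).add (hz2 τ)).const_smul y₁).add ((hz3 τ).const_smul y₂)).add (hz4 τ)
    have hV := ((((hz1 τ).sub (hz2 τ)).const_smul y₂).add ((hz3 τ).const_smul y₁)).add (hz5 τ)
    rw [← omega3_tangents_deriv_eq_zero (z₁ τ) (z₂ τ) (z₃ τ) (z₄ τ) (z₅ τ) y₁ y₂]
    exact hasDerivAt_omega3 hU hV
  exact is_const_of_deriv_eq_zero (fun τ => (hderiv τ).differentiableAt)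
    (fun τ => (hderiv τ).deriv) t s

end PhiMap

theorem statement_1
    (z₁ z₂ z₃ z₄ z₅ z₆ : ℝ → C3)
    (hc1 : omega3 (z₂ 0) (z₃ 0) = 0)
    (hc2 : omega3 (z₁ 0) (z₃ 0) = 0)
    (hc3 : omega3 (z₁ 0) (z₂ 0) = 0)
    (hc4 : omega3 (z₁ 0) (z₅ 0) + omega3 (z₂ 0) (z₅ 0) - omega3 (z₃ 0) (z₄ 0) = 0)
    (hc5 : -omega3 (z₁ 0) (z₄ 0) + omega3 (z₂ 0) (z₄ 0) + omega3 (z₃ 0) (z₅ 0) = 0)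
    (hc6 : omega3 (z₄ 0) (z₅ 0) = 0)
    (hz1 : ∀ t : ℝ, HasDerivAt z₁ ((2:ℝ) • cross3 (z₂ t) (z₃ t)) t)
    (hz2 : ∀ t : ℝ, HasDerivAt z₂ ((2:ℝ) • cross3 (z₁ t) (z₃ t)) t)
    (hz3 : ∀ t : ℝ, HasDerivAt z₃ ((-2:ℝ) • cross3 (z₁ t) (z₂ t)) t)
    (hz4 : ∀ t : ℝ, HasDerivAt z₄
      (cross3 (z₁ t) (z₅ t) + cross3 (z₂ t) (z₅ t) - cross3 (z₃ t) (z₄ t)) t)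
    (hz5 : ∀ t : ℝ, HasDerivAt z₅
      (-cross3 (z₁ t) (z₄ t) + cross3 (z₂ t) (z₄ t) + cross3 (z₃ t) (z₅ t)) t)
    (hz6 : ∀ t : ℝ, HasDerivAt z₆ (cross3 (z₄ t) (z₅ t)) t) :
    ∀ y₁ y₂ t : ℝ,
      omega3 (deriv (fun s => PhiMap z₁ z₂ z₃ z₄ z₅ z₆ s y₂ t) y₁)
             (deriv (fun s => PhiMap z₁ z₂ z₃ z₄ z₅ z₆ y₁ s t) y₂) = 0 ∧
      omega3 (deriv (fun s => PhiMap z₁ z₂ z₃ z₄ z₅ z₆ s y₂ t) y₁)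
             (deriv (fun s => PhiMap z₁ z₂ z₃ z₄ z₅ z₆ y₁ y₂ s) t) = 0 ∧
      omega3 (deriv (fun s => PhiMap z₁ z₂ z₃ z₄ z₅ z₆ y₁ s t) y₂)
             (deriv (fun s => PhiMap z₁ z₂ z₃ z₄ z₅ z₆ y₁ y₂ s) t) = 0 ∧
      cross3 (deriv (fun s => PhiMap z₁ z₂ z₃ z₄ z₅ z₆ s y₂ t) y₁)
             (deriv (fun s => PhiMap z₁ z₂ z₃ z₄ z₅ z₆ y₁ s t) y₂)
        = deriv (fun s => PhiMap z₁ z₂ z₃ z₄ z₅ z₆ y₁ y₂ s) t := by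
  intro y₁ y₂ t
  rw [(hasDerivAt_PhiMap_fst y₁ y₂ t).deriv, (hasDerivAt_PhiMap_snd y₁ y₂ t).deriv,
    (hasDerivAt_PhiMap_time y₁ y₂ t hz1 hz2 hz3 hz4 hz5 hz6).deriv]
  have hcross := cross3_tangents_eq (z₁ t) (z₂ t) (z₃ t) (z₄ t) (z₅ t) y₁ y₂
  have hω : omega3 (y₁ • (z₁ t + z₂ t) + y₂ • z₃ t + z₄ t)
      (y₂ • (z₁ t - z₂ t) + y₁ • z₃ t + z₅ t) = 0 := by
    rw [omega3_tangents_const y₁ y₂ t hz1 hz2 hz3 hz4 hz5 0, omega3_tangents_eq,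
      hc1, hc2, hc3, hc4, hc5, hc6]
    ring
  simp only [PhiMap]
  rw [← hcross]
  exact ⟨hω, omega3_cross3_self_left _ _, omega3_cross3_self_right _ _, rfl⟩
end
end

section
/- Let z₁, z₂, z₃ : ℝ → ℂ³ satisfy ω(z₂,z₃) = ω(z₁,z₃) = ω(z₁,z₂) = 0 and the evolution equations dz₁/dt = 2 z₂×z₃, dz₂/dt = 2 z₁×z₃, dz₃/dt = −2 z₁×z₂ for all t ∈ ℝ, and suppose that for every t ∈ ℝ the real span of {z₁(t), z₂(t), z₃(t)} in ℂ³ has dimension 2. Then there exist a, b, c, d ∈ ℝ with δ = ad − bc ≠ 0 such that the transformed functions z₁′(t) = ½(a²+b²+c²+d²)z₁(δt) + ½(a²+b²−c²−d²)z₂(δt) + (ac+bd)z₃(δt), z₂′(t) = ½(a²−b²+c²−d²)z₁(δt) + ½(a²−b²−c²+d²)z₂(δt) + (ac−bd)z₃(δt), z₃′(t) = (ab+cd)z₁(δt) + (ab−cd)z₂(δt) + (ad+bc)z₃(δt) satisfy z₁′(0) = z₂′(0) and |z₃′(0)| = 1. -/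
/-!
The real dependence of `z₁, z₂, z₃` makes the complex determinant `det (z₁, z₂, z₃)` vanish
identically, and differentiating it along the flow gives
`|z₂ × z₃|² = |z₁ × z₃|² + |z₁ × z₂|²`. A vanishing cross product together with `ω = 0` forces
two vectors to be real multiples of each other, so the rank-2 hypothesis gives `z₂ × z₃ ≠ 0`.
Hence `z₂, z₃` are independent, `z₁ = p z₂ + q z₃`, and the identity reads `p² + q² = 1`.
Writing `p - i q = (d + i b)²` and `(a, c) = (d, -b) / |-q z₂ + p z₃|` gives the transformation.
-/

noncomputable section

open Complex ComplexConjugate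

/-- Euclidean norm on ℂ³. -/
def enorm3 (u : C3) : ℝ :=
  Real.sqrt (Complex.normSq u.1 + Complex.normSq u.2.1 + Complex.normSq u.2.2)

def herm3 (u v : C3) : ℂ := conj u.1 * v.1 + conj u.2.1 * v.2.1 + conj u.2.2 * v.2.2

def normSq3 (u : C3) : ℝ := normSq u.1 + normSq u.2.1 + normSq u.2.2

section Algebra

variable (u v w : C3) (r : ℝ)

lemma cross3_add_left : cross3 (u + v) w = cross3 u w + cross3 v w := by
  ext <;> simp only [cross3, Prod.fst_add, Prod.snd_add, map_sub, map_add, map_mul] <;> ring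

lemma cross3_add_right : cross3 u (v + w) = cross3 u v + cross3 u w := by
  ext <;> simp only [cross3, Prod.fst_add, Prod.snd_add, map_sub, map_add, map_mul] <;> ring

lemma cross3_smul_left : cross3 (r • u) v = r • cross3 u v := by
  ext <;> simp only [cross3, Prod.smul_fst, Prod.smul_snd, real_smul, map_sub, map_mul,
    conj_ofReal] <;> ring

lemma cross3_smul_right : cross3 u (r • v) = r • cross3 u v := by
  ext <;> simp only [cross3, Prod.smul_fst, Prod.smul_snd, real_smul, map_sub, map_mul,
    conj_ofReal] <;> ring

@[simp]
lemma cross3_self : cross3 u u = 0 := by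
  ext <;> simp only [cross3, Prod.fst_zero, Prod.snd_zero] <;> ring_nf <;> simp

@[simp]
lemma cross3_zero_left : cross3 0 v = 0 := by
  simpa using cross3_smul_left v v 0

@[simp]
lemma cross3_zero_right : cross3 u 0 = 0 := by
  simpa using cross3_smul_right u u 0

lemma cross3_anticomm : -cross3 u v = cross3 v u := by
  ext <;> simp only [cross3, Prod.fst_neg, Prod.snd_neg, map_sub, map_mul] <;> ring

lemma omega3_eq_im_herm3 : omega3 u v = (herm3 u v).im := by
  simp only [omega3, herm3, add_im]

@[simp]
lemma omega3_self : omega3 u u = 0 := by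
  simp [omega3, ← normSq_eq_conj_mul_self]

lemma omega3_anticomm : -omega3 u v = omega3 v u := by
  have h (a b : ℂ) : (conj b * a).im = -(conj a * b).im := by
    simp only [mul_im, conj_re, conj_im]; ring
  simp only [omega3, h v.1, h v.2.1, h v.2.2]
  ring

lemma normSq3_nonneg : 0 ≤ normSq3 u :=
  add_nonneg (add_nonneg (normSq_nonneg _) (normSq_nonneg _)) (normSq_nonneg _)

lemma normSq3_eq_zero : normSq3 u = 0 ↔ u = 0 := by
  refine ⟨fun h ↦ ?_, by rintro rfl; simp [normSq3]⟩
  have h1 := normSq_nonneg u.1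
  have h2 := normSq_nonneg u.2.1
  have h3 := normSq_nonneg u.2.2
  unfold normSq3 at h
  ext <;> simp only [Prod.fst_zero, Prod.snd_zero, ← normSq_eq_zero] <;> linarith

lemma normSq3_smul : normSq3 (r • u) = r ^ 2 * normSq3 u := by
  simp only [normSq3, Prod.smul_fst, Prod.smul_snd, real_smul, normSq_mul, normSq_ofReal]
  ring

lemma enorm3_smul : enorm3 (r • u) = |r| * enorm3 u := by
  rw [enorm3, ← normSq3, normSq3_smul, Real.sqrt_mul (sq_nonneg r), Real.sqrt_sq_eq_abs]; rfl

end Algebra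

lemma enorm3_pos {u : C3} (hu : u ≠ 0) : 0 < enorm3 u :=
  Real.sqrt_pos.mpr <| (normSq3_nonneg u).lt_of_ne' (mt (normSq3_eq_zero u).mp hu)

lemma cross3_eq_zero_iff {u v : C3} : cross3 u v = 0 ↔
    u.2.1 * v.2.2 = u.2.2 * v.2.1 ∧ u.2.2 * v.1 = u.1 * v.2.2 ∧ u.1 * v.2.1 = u.2.1 * v.1 := by
  simp only [cross3, Prod.ext_iff, Prod.fst_zero, Prod.snd_zero, mul_eq_zero, one_div, inv_eq_zero,
    OfNat.ofNat_ne_zero, false_or, map_eq_zero, sub_eq_zero]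

-- Lagrange's identity `conj u × (u × v) = ⟨u, v⟩ u - |u|² v`, read componentwise.
lemma normSq3_smul_eq_herm3_smul {u v : C3} (h : cross3 u v = 0) :
    (normSq3 u : ℂ) • v = herm3 u v • u := by
  obtain ⟨h₁, h₂, h₃⟩ := cross3_eq_zero_iff.mp h
  simp only [normSq3, herm3, ofReal_add, normSq_eq_conj_mul_self]
  ext <;> simp only [Prod.smul_fst, Prod.smul_snd, smul_eq_mul]
  · linear_combination conj u.2.2 * h₂ - conj u.2.1 * h₃
  · linear_combination conj u.1 * h₃ - conj u.2.2 * h₁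
  · linear_combination conj u.2.1 * h₁ - conj u.1 * h₂

lemma mem_span_singleton_of_cross3_eq_zero {u v : C3} (hc : cross3 u v = 0)
    (hω : omega3 u v = 0) (hu : u ≠ 0) : v ∈ ℝ ∙ u := by
  have hN : (normSq3 u : ℂ) ≠ 0 := ofReal_ne_zero.mpr (mt (normSq3_eq_zero u).mp hu)
  have hreal : herm3 u v = ((herm3 u v).re : ℂ) :=
    Complex.ext rfl (by simpa [omega3_eq_im_herm3] using hω)
  refine Submodule.mem_span_singleton.mpr ⟨(herm3 u v).re / normSq3 u, ?_⟩
  rw [← smul_right_inj hN, normSq3_smul_eq_herm3_smul hc, ← coe_smul, smul_smul]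
  conv_rhs => rw [hreal]
  push_cast
  field_simp

lemma finrank_span_le_one_of_cross3_omega3_eq_zero {S : Set C3}
    (h : ∀ x ∈ S, ∀ y ∈ S, cross3 x y = 0 ∧ omega3 x y = 0) :
    Module.finrank ℝ (Submodule.span ℝ S) ≤ 1 := by
  by_cases hS : ∃ e ∈ S, e ≠ 0
  · obtain ⟨e, he, he0⟩ := hS
    have hle : Submodule.span ℝ S ≤ ℝ ∙ e := Submodule.span_le.mpr fun x hx ↦
      mem_span_singleton_of_cross3_eq_zero (h e he x hx).1 (h e he x hx).2 he0
    exact (Submodule.finrank_mono hle).trans (finrank_span_singleton he0).le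
  · push Not at hS
    rw [(Submodule.span_eq_bot (R := ℝ)).mpr hS, finrank_bot]
    exact zero_le_one

lemma linearIndependent_of_cross3_ne_zero {v w : C3} (h : cross3 v w ≠ 0) :
    LinearIndependent ℝ ![v, w] := by
  refine LinearIndependent.pair_iff.mpr fun s t hst ↦ ⟨?_, ?_⟩
  · have hs : s • cross3 v w = 0 := by
      simpa [cross3_add_left, cross3_smul_left] using congrArg (cross3 · w) hst
    exact (smul_eq_zero.mp hs).resolve_right h
  · have ht : t • cross3 v w = 0 := by
      simpa [cross3_add_right, cross3_smul_right] using congrArg (cross3 v ·) hst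
    exact (smul_eq_zero.mp ht).resolve_right h

def det3 (u v w : C3) : ℂ :=
  Matrix.det !![u.1, v.1, w.1; u.2.1, v.2.1, w.2.1; u.2.2, v.2.2, w.2.2]

lemma det3_eq (u v w : C3) : det3 u v w =
    u.1 * (v.2.1 * w.2.2 - v.2.2 * w.2.1) + u.2.1 * (v.2.2 * w.1 - v.1 * w.2.2)
      + u.2.2 * (v.1 * w.2.1 - v.2.1 * w.1) := by
  simp only [det3, Matrix.det_fin_three, Matrix.of_apply, Matrix.cons_val', Matrix.cons_val_zero,
    Matrix.cons_val_one, Matrix.cons_val, Matrix.cons_val_fin_one]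
  ring

lemma det3_eq_zero_of_finrank_span_lt {u v w : C3}
    (h : Module.finrank ℝ (Submodule.span ℝ {u, v, w}) < 3) : det3 u v w = 0 := by
  have hdep : ¬ LinearIndependent ℝ ![u, v, w] := by
    rw [linearIndependent_iff_card_eq_finrank_span, Set.finrank, Matrix.range_cons,
      Matrix.range_cons_cons_empty, Set.singleton_union, Fintype.card_fin]
    exact h.ne'
  obtain ⟨g, hg, i, hi⟩ := Fintype.not_linearIndependent_iff.mp hdep
  simp only [Fin.sum_univ_three] at hg
  refine Matrix.exists_mulVec_eq_zero_iff.mp ⟨fun i ↦ (g i : ℂ), ?_, ?_⟩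
  · exact fun h0 ↦ hi (by simpa using congrFun h0 i)
  · ext k
    fin_cases k <;> simp only [Matrix.mulVec, dotProduct, Fin.sum_univ_three, Matrix.of_apply,
      Matrix.cons_val', Matrix.cons_val_fin_one, Matrix.cons_val_zero, Matrix.cons_val_one,
      Matrix.cons_val, Pi.zero_apply, Fin.zero_eta, Fin.mk_one, Fin.reduceFinMk]
    · simpa [mul_comm] using congrArg Prod.fst hg
    · simpa [mul_comm] using congrArg (·.2.1) hg
    · simpa [mul_comm] using congrArg (·.2.2) hg

lemma hasDerivAt_coords {f : ℝ → C3} {f' : C3} {t : ℝ} (hf : HasDerivAt f f' t) :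
    HasDerivAt (fun s ↦ (f s).1) f'.1 t ∧ HasDerivAt (fun s ↦ (f s).2.1) f'.2.1 t ∧
      HasDerivAt (fun s ↦ (f s).2.2) f'.2.2 t :=
  ⟨hf.fst, hf.snd.fst, hf.snd.snd⟩

lemma hasDerivAt_det3 {f g h : ℝ → C3} {f' g' h' : C3} {t : ℝ}
    (hf : HasDerivAt f f' t) (hg : HasDerivAt g g' t) (hh : HasDerivAt h h' t) :
    HasDerivAt (fun s ↦ det3 (f s) (g s) (h s))
      (det3 f' (g t) (h t) + det3 (f t) g' (h t) + det3 (f t) (g t) h') t := by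
  obtain ⟨f₁, f₂, f₃⟩ := hasDerivAt_coords hf
  obtain ⟨g₁, g₂, g₃⟩ := hasDerivAt_coords hg
  obtain ⟨h₁, h₂, h₃⟩ := hasDerivAt_coords hh
  simp only [det3_eq]
  refine (((f₁.mul ((g₂.mul h₃).sub (g₃.mul h₂))).add
    (f₂.mul ((g₃.mul h₁).sub (g₁.mul h₃)))).add
    (f₃.mul ((g₁.mul h₂).sub (g₂.mul h₁)))).congr_deriv ?_
  simp only [Pi.mul_apply, Pi.sub_apply]
  ring

lemma det3_cross3_flow (u v w : C3) :
    det3 ((2 : ℝ) • cross3 v w) v w + det3 u ((2 : ℝ) • cross3 u w) w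
      + det3 u v ((-2 : ℝ) • cross3 u v)
      = (4 * (normSq3 (cross3 v w) - normSq3 (cross3 u w) - normSq3 (cross3 u v)) : ℝ) := by
  simp only [normSq3]
  push_cast
  simp only [← mul_conj]
  simp only [det3_eq, cross3, Prod.smul_fst, Prod.smul_snd, real_smul, map_mul, map_sub,
    conj_conj, map_div₀, map_one, map_ofNat]
  push_cast
  ring

lemma normSq3_cross3_balance {z₁ z₂ z₃ : ℝ → C3} {t : ℝ}
    (hz₁ : HasDerivAt z₁ ((2 : ℝ) • cross3 (z₂ t) (z₃ t)) t)
    (hz₂ : HasDerivAt z₂ ((2 : ℝ) • cross3 (z₁ t) (z₃ t)) t)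
    (hz₃ : HasDerivAt z₃ ((-2 : ℝ) • cross3 (z₁ t) (z₂ t)) t)
    (hdet : ∀ s, det3 (z₁ s) (z₂ s) (z₃ s) = 0) :
    normSq3 (cross3 (z₂ t) (z₃ t))
      = normSq3 (cross3 (z₁ t) (z₃ t)) + normSq3 (cross3 (z₁ t) (z₂ t)) := by
  have hD := hasDerivAt_det3 hz₁ hz₂ hz₃
  simp only [hdet, det3_cross3_flow] at hD
  have := (hasDerivAt_const t (0 : ℂ)).unique hD
  norm_cast at this
  linarith

lemma cross3_ne_zero_of_finrank_span_eq_two {u v w : C3} (hvw : omega3 v w = 0)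
    (huw : omega3 u w = 0) (huv : omega3 u v = 0)
    (hbal : normSq3 (cross3 v w) = normSq3 (cross3 u w) + normSq3 (cross3 u v))
    (h : Module.finrank ℝ (Submodule.span ℝ {u, v, w}) = 2) : cross3 v w ≠ 0 := by
  intro hX
  rw [hX, (normSq3_eq_zero 0).mpr rfl] at hbal
  have := normSq3_nonneg (cross3 u w)
  have := normSq3_nonneg (cross3 u v)
  have h₁₃ : cross3 u w = 0 := (normSq3_eq_zero _).mp (by linarith)
  have h₁₂ : cross3 u v = 0 := (normSq3_eq_zero _).mp (by linarith)
  have hle := finrank_span_le_one_of_cross3_omega3_eq_zero (S := {u, v, w}) ?_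
  · omega
  simp only [Set.mem_insert_iff, Set.mem_singleton_iff]
  rintro x (rfl | rfl | rfl) y (rfl | rfl | rfl) <;>
    simp [hX, h₁₃, h₁₂, hvw, huw, huv, ← cross3_anticomm, ← omega3_anticomm]

lemma sq_add_sq_eq_one_of_normSq3_cross3_balance {u v w : C3} {p q : ℝ} (hu : u = p • v + q • w)
    (hbal : normSq3 (cross3 v w) = normSq3 (cross3 u w) + normSq3 (cross3 u v))
    (hX : cross3 v w ≠ 0) : p ^ 2 + q ^ 2 = 1 := by
  have h₁₃ : cross3 u w = p • cross3 v w := by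
    simp [hu, cross3_add_left, cross3_smul_left]
  have h₁₂ : cross3 u v = (-q) • cross3 v w := by
    simp [hu, cross3_add_left, cross3_smul_left, ← cross3_anticomm v w]
  rw [h₁₃, h₁₂, normSq3_smul, normSq3_smul] at hbal
  have hN : normSq3 (cross3 v w) ≠ 0 := mt (normSq3_eq_zero _).mp hX
  exact mul_right_cancel₀ hN (by linear_combination -hbal)

lemma exists_eq_smul_add_smul_of_finrank_span_eq_two {K V : Type*} [Field K] [AddCommGroup V]
    [Module K V] {u v w : V} (hvw : LinearIndependent K ![v, w])
    (h : Module.finrank K (Submodule.span K {u, v, w}) = 2) :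
    ∃ p q : K, u = p • v + q • w := by
  have hrank := finrank_span_eq_card hvw
  rw [Matrix.range_cons_cons_empty, Fintype.card_fin] at hrank
  have := FiniteDimensional.span_of_finite K (Set.toFinite {u, v, w})
  have hspan : Submodule.span K {v, w} = Submodule.span K {u, v, w} :=
    Submodule.eq_of_le_of_finrank_eq (Submodule.span_mono (Set.subset_insert _ _))
      (by rw [hrank, h])
  obtain ⟨p, q, hpq⟩ := Submodule.mem_span_pair.mp
    (hspan ▸ Submodule.subset_span (Set.mem_insert u {v, w}))
  exact ⟨p, q, hpq.symm⟩

lemma exists_half_angle_of_sq_add_sq_eq_one {p q : ℝ} (h : p ^ 2 + q ^ 2 = 1) :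
    ∃ b d : ℝ, d ^ 2 - b ^ 2 = p ∧ 2 * (b * d) = -q ∧ b ^ 2 + d ^ 2 = 1 := by
  obtain ⟨s, hs⟩ := IsAlgClosed.exists_pow_nat_eq (⟨p, -q⟩ : ℂ) two_pos
  have hre : s.re ^ 2 - s.im ^ 2 = p := by simpa [sq] using congrArg re hs
  have him : 2 * (s.im * s.re) = -q := by
    have := congrArg im hs
    simp only [sq, mul_im] at this
    linarith
  refine ⟨s.im, s.re, hre, him, ?_⟩
  have hsq : (s.im ^ 2 + s.re ^ 2) ^ 2 = 1 ^ 2 := by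
    rw [one_pow, ← h, ← hre, show q = -(2 * (s.im * s.re)) by linarith]
    ring
  exact (sq_eq_sq₀ (by positivity) zero_le_one).mp hsq

lemma exists_normalizing_transform {u v w : C3} {p q : ℝ} (hu : u = p • v + q • w)
    (hpq : p ^ 2 + q ^ 2 = 1) (hvw : LinearIndependent ℝ ![v, w]) :
    ∃ a b c d : ℝ, a * d - b * c ≠ 0 ∧
      (((1/2 : ℝ) * (a^2 + b^2 + c^2 + d^2)) • u
        + ((1/2 : ℝ) * (a^2 + b^2 - c^2 - d^2)) • v + (a*c + b*d) • w
       = ((1/2 : ℝ) * (a^2 - b^2 + c^2 - d^2)) • u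
        + ((1/2 : ℝ) * (a^2 - b^2 - c^2 + d^2)) • v + (a*c - b*d) • w) ∧
      enorm3 ((a*b + c*d) • u + (a*b - c*d) • v + (a*d + b*c) • w) = 1 := by
  obtain ⟨b, d, hp, hq, hbd⟩ := exists_half_angle_of_sq_add_sq_eq_one hpq
  have hne : (-q) • v + p • w ≠ 0 := fun h0 ↦ by
    obtain ⟨hq0, hp0⟩ := LinearIndependent.pair_iff.mp hvw _ _ h0
    simp [neg_eq_zero.mp hq0, hp0] at hpq
  have hE := enorm3_pos hne
  set E := enorm3 ((-q) • v + p • w)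
  refine ⟨d / E, b, -(b / E), d, ?_, ?_, ?_⟩
  · have : d / E * d - b * -(b / E) = 1 / E := by rw [← hbd]; ring
    rw [this]
    positivity
  · subst hu
    match_scalars
    · linear_combination p * hbd - hp
    · linear_combination q * hbd + hq
  · have : (d / E * b + -(b / E) * d) • u + (d / E * b - -(b / E) * d) • v
        + (d / E * d + b * -(b / E)) • w = E⁻¹ • ((-q) • v + p • w) := by
      subst hu
      match_scalars
      · linear_combination hq / E
      · linear_combination hp / E
    rw [this, enorm3_smul, abs_inv, abs_of_pos hE, inv_mul_cancel₀ hE.ne']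

theorem statement_5
    (z₁ z₂ z₃ : ℝ → C3)
    (hc1 : ∀ t : ℝ, omega3 (z₂ t) (z₃ t) = 0)
    (hc2 : ∀ t : ℝ, omega3 (z₁ t) (z₃ t) = 0)
    (hc3 : ∀ t : ℝ, omega3 (z₁ t) (z₂ t) = 0)
    (hz1 : ∀ t : ℝ, HasDerivAt z₁ ((2:ℝ) • cross3 (z₂ t) (z₃ t)) t)
    (hz2 : ∀ t : ℝ, HasDerivAt z₂ ((2:ℝ) • cross3 (z₁ t) (z₃ t)) t)
    (hz3 : ∀ t : ℝ, HasDerivAt z₃ ((-2:ℝ) • cross3 (z₁ t) (z₂ t)) t)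
    (hdim : ∀ t : ℝ,
      Module.finrank ℝ (Submodule.span ℝ ({z₁ t, z₂ t, z₃ t} : Set C3)) = 2) :
    ∃ a b c d : ℝ, a * d - b * c ≠ 0 ∧
      (((1/2 : ℝ) * (a^2 + b^2 + c^2 + d^2)) • z₁ 0
        + ((1/2 : ℝ) * (a^2 + b^2 - c^2 - d^2)) • z₂ 0 + (a*c + b*d) • z₃ 0
       = ((1/2 : ℝ) * (a^2 - b^2 + c^2 - d^2)) • z₁ 0
        + ((1/2 : ℝ) * (a^2 - b^2 - c^2 + d^2)) • z₂ 0 + (a*c - b*d) • z₃ 0) ∧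
      enorm3 ((a*b + c*d) • z₁ 0 + (a*b - c*d) • z₂ 0 + (a*d + b*c) • z₃ 0) = 1 := by
  have hdet : ∀ t, det3 (z₁ t) (z₂ t) (z₃ t) = 0 := fun t ↦
    det3_eq_zero_of_finrank_span_lt (by rw [hdim t]; norm_num)
  have hbal := normSq3_cross3_balance (hz1 0) (hz2 0) (hz3 0) hdet
  have hX := cross3_ne_zero_of_finrank_span_eq_two (hc1 0) (hc2 0) (hc3 0) hbal (hdim 0)
  have hind := linearIndependent_of_cross3_ne_zero hX
  obtain ⟨p, q, hz⟩ := exists_eq_smul_add_smul_of_finrank_span_eq_two hind (hdim 0)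
  exact exists_normalizing_transform hz
    (sq_add_sq_eq_one_of_normSq3_cross3_balance hz hbal hX) hind
end
end
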